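/- Let E be a finite-dimensional real inner product space, let S_1, …, S_K be linear subspaces of E, and fix a class index y. Let z ∈ E admit a decomposition z = s + e with s ∈ S_y, ‖e‖ ≤ ε, and ‖s‖ ≥ γ > 0. Let α ∈ (0, π/2] be such that for every j ≠ y and every unit vector u ∈ S_y, ‖P_{S_j} u‖ ≤ cos α. Then dist(z, S_y) ≤ ε, for every j ≠ y one has dist(z, S_j) ≥ γ · sin α − ε, and consequently for every j ≠ y, dist(z, S_j) − dist(z, S_y) ≥ γ · sin α − 2ε. -/

import Mathlib

/-! If `s ∈ S_y` has `‖P_{S_j} s‖ ≤ ‖s‖ cos α`, Pythagoras gives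
`dist(s, S_j)² = ‖s‖² - ‖P_{S_j} s‖² ≥ ‖s‖² sin² α`, so `dist(s, S_j) ≥ ‖s‖ |sin α| ≥ γ sin α`.
Since `z = s + e` and distance to a set is 1-Lipschitz, moving from `s` to `z` costs at most `‖e‖ ≤ ε` in each distance. -/

namespace Submodule

variable {E : Type*} [NormedAddCommGroup E] [InnerProductSpace ℝ E]

theorem infDist_eq_norm_sub_starProjection (K : Submodule ℝ E) [K.HasOrthogonalProjection]
    (x : E) : Metric.infDist x (K : Set E) = ‖x - K.starProjection x‖ := by
  rw [Metric.infDist_eq_iInf, starProjection_minimal]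
  simp only [dist_eq_norm]
  rfl

theorem norm_starProjection_le_mul_of_forall_norm_eq_one {U V : Submodule ℝ E}
    [V.HasOrthogonalProjection] {c : ℝ}
    (h : ∀ u ∈ U, ‖u‖ = 1 → ‖V.starProjection u‖ ≤ c) {s : E} (hs : s ∈ U) :
    ‖V.starProjection s‖ ≤ ‖s‖ * c := by
  rcases eq_or_ne s 0 with rfl | hs0
  · simp
  have hnorm : 0 < ‖s‖ := norm_pos_iff.mpr hs0
  have hunit := h (‖s‖⁻¹ • s) (U.smul_mem _ hs) (norm_smul_inv_norm hs0)
  rwa [map_smul, norm_smul, norm_inv, norm_norm, inv_mul_le_iff₀ hnorm] at hunit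

theorem norm_mul_abs_sin_le_infDist (V : Submodule ℝ E) [V.HasOrthogonalProjection] {s : E}
    {α : ℝ} (h : ‖V.starProjection s‖ ≤ ‖s‖ * Real.cos α) :
    ‖s‖ * |Real.sin α| ≤ Metric.infDist s (V : Set E) := by
  have hpyth : ‖s‖ ^ 2 = ‖V.starProjection s‖ ^ 2 + ‖s - V.starProjection s‖ ^ 2 := by
    simpa using V.norm_sq_eq_add_norm_sq_starProjection s
  have hproj_sq : ‖V.starProjection s‖ ^ 2 ≤ (‖s‖ * Real.cos α) ^ 2 :=
    pow_le_pow_left₀ (norm_nonneg _) h 2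
  rw [infDist_eq_norm_sub_starProjection,
    ← pow_le_pow_iff_left₀ (by positivity) (norm_nonneg _) two_ne_zero, mul_pow, sq_abs]
  nlinarith [Real.sin_sq_add_cos_sq α]

end Submodule

theorem stmt_9_general {E : Type*} [NormedAddCommGroup E] [InnerProductSpace ℝ E]
    [FiniteDimensional ℝ E]
    (K : ℕ) (S : Fin K → Submodule ℝ E) (y : Fin K)
    (z s e : E) (ε γ α : ℝ)
    (hz : z = s + e) (hs : s ∈ S y) (he : ‖e‖ ≤ ε)
    (hγ : 0 < γ) (hsγ : ‖s‖ ≥ γ)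
    (hang : ∀ j, j ≠ y → ∀ u : E, u ∈ S y → ‖u‖ = 1 →
      ‖(Submodule.orthogonalProjectionOnto (S j) u : E)‖ ≤ Real.cos α) :
    Metric.infDist z (S y : Set E) ≤ ε ∧
      (∀ j, j ≠ y → Metric.infDist z (S j : Set E) ≥ γ * Real.sin α - ε) ∧
      (∀ j, j ≠ y →
        Metric.infDist z (S j : Set E) - Metric.infDist z (S y : Set E) ≥
          γ * Real.sin α - 2 * ε) := by
  have hdist : dist s z = ‖e‖ := by simp [hz, dist_eq_norm]
  have hy : Metric.infDist z (S y : Set E) ≤ ε :=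
    calc Metric.infDist z (S y : Set E) ≤ dist z s := Metric.infDist_le_dist_of_mem hs
      _ ≤ ε := by rwa [dist_comm, hdist]
  have hj : ∀ j, j ≠ y → Metric.infDist z (S j : Set E) ≥ γ * Real.sin α - ε := by
    intro j hjy
    have hproj := Submodule.norm_starProjection_le_mul_of_forall_norm_eq_one (hang j hjy) hs
    have hγs : γ * Real.sin α ≤ ‖s‖ * |Real.sin α| :=
      calc γ * Real.sin α ≤ γ * |Real.sin α| := by gcongr; exact le_abs_self _
        _ ≤ ‖s‖ * |Real.sin α| := by gcongr
    calc γ * Real.sin α - ε ≤ ‖s‖ * |Real.sin α| - ‖e‖ := by linarith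
      _ ≤ Metric.infDist s (S j : Set E) - dist s z := by
          rw [hdist]; gcongr; exact (S j).norm_mul_abs_sin_le_infDist hproj
      _ ≤ Metric.infDist z (S j : Set E) := by
          linarith [Metric.infDist_le_infDist_add_dist (x := s) (y := z) (s := (S j : Set E))]
  exact ⟨hy, hj, fun j hjy => by linarith [hj j hjy]⟩

/-- **Subspace residual margin lower bound (Theorem 5, quantitative part).**
If `z = s + e` with `s ∈ S_y`, `‖e‖ ≤ ε`, `‖s‖ ≥ γ > 0`, and every unit vector
`u ∈ S_y` satisfies `‖P_{S_j} u‖ ≤ cos α` for all `j ≠ y` (with `α ∈ (0, π/2]`), then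
`dist(z, S_y) ≤ ε`, `dist(z, S_j) ≥ γ sin α − ε` for all `j ≠ y`, and consequently
`dist(z, S_j) − dist(z, S_y) ≥ γ sin α − 2ε` for all `j ≠ y`. -/
theorem stmt_9 {E : Type*} [NormedAddCommGroup E] [InnerProductSpace ℝ E]
    [FiniteDimensional ℝ E]
    (K : ℕ) (S : Fin K → Submodule ℝ E) (y : Fin K)
    (z s e : E) (ε γ α : ℝ)
    (hz : z = s + e) (hs : s ∈ S y) (he : ‖e‖ ≤ ε)
    (hγ : 0 < γ) (hsγ : ‖s‖ ≥ γ)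
    (hα0 : 0 < α) (hα1 : α ≤ Real.pi / 2)
    (hang : ∀ j, j ≠ y → ∀ u : E, u ∈ S y → ‖u‖ = 1 →
      ‖(Submodule.orthogonalProjectionOnto (S j) u : E)‖ ≤ Real.cos α) :
    Metric.infDist z (S y : Set E) ≤ ε ∧
      (∀ j, j ≠ y → Metric.infDist z (S j : Set E) ≥ γ * Real.sin α - ε) ∧
      (∀ j, j ≠ y →
        Metric.infDist z (S j : Set E) - Metric.infDist z (S y : Set E) ≥
          γ * Real.sin α - 2 * ε) :=
  stmt_9_general K S y z s e ε γ α hz hs he hγ hsγ hang
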